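/- arXiv:1606.02802 — 5 statements merged into one kernel-verified Lean document; each statement's English description precedes it below -/
import Mathlib

section
/- Suppose there exists a strictly increasing sequence of positive integers (θ(n))_{n∈ℕ} such that Σ_{i=1}^m p_i(θ(n)) ≥ 1 for all n ∈ ℕ, and that lim_{n→∞} τ_i(n) = ∞ for each 1 ≤ i ≤ m. Then every solution of (E_R) oscillates. -/
/-!
If `x` were eventually positive, then, since every delay `τ i n` tends to infinity, the
equation would make `x` eventually nonincreasing, so `x (τ i n) ≥ x n` for all large `n`.
At a large `n = θ k` this gives `x (n + 1) = x n - ∑ p i n x (τ i n) ≤ (1 - ∑ p i n) x n ≤ 0`,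
a contradiction. Eventually negative solutions are excluded by passing to `-x`.
-/

open Filter

section

variable {ι : Type*} [Fintype ι] {p : ι → ℤ → ℝ} {τ : ι → ℤ → ℤ} {x : ℤ → ℝ}

def IsRetardedSolution (p : ι → ℤ → ℝ) (τ : ι → ℤ → ℤ) (x : ℤ → ℝ) : Prop :=
  ∀ n : ℤ, 0 ≤ n → x (n + 1) - x n + ∑ i, p i n * x (τ i n) = 0

theorem IsRetardedSolution.neg (hx : IsRetardedSolution p τ x) :
    IsRetardedSolution p τ (-x) := by
  intro n hn
  simp only [Pi.neg_apply, mul_neg, Finset.sum_neg_distrib]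
  linarith [hx n hn]

theorem IsRetardedSolution.antitoneOn (hx : IsRetardedSolution p τ x)
    (hp : ∀ i n, 0 ≤ n → 0 ≤ p i n) {N : ℤ} (hN : 0 ≤ N)
    (hτx : ∀ n ≥ N, ∀ i, 0 ≤ x (τ i n)) : AntitoneOn x (Set.Ici N) := by
  refine antitoneOn_of_add_one_le Set.ordConnected_Ici fun n _ hn _ => ?_
  have hsum : 0 ≤ ∑ i, p i n * x (τ i n) :=
    Finset.sum_nonneg fun i _ => mul_nonneg (hp i n (hN.trans hn)) (hτx n hn i)
  linarith [hx n (hN.trans hn)]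

theorem IsRetardedSolution.not_eventually_pos (hx : IsRetardedSolution p τ x)
    (hp : ∀ i n, 0 ≤ n → 0 ≤ p i n) (hτ : ∀ i n, 0 ≤ n → τ i n ≤ n)
    (hτlim : ∀ i, Tendsto (τ i) atTop atTop) (hfreq : ∃ᶠ n in atTop, 1 ≤ ∑ i, p i n) :
    ¬ ∀ᶠ n in atTop, 0 < x n := by
  intro hpos
  have hτpos : ∀ᶠ n in atTop, ∀ i, 0 < x (τ i n) :=
    eventually_all.2 fun i => (hτlim i).eventually hpos
  obtain ⟨N, hN⟩ := (hpos.and (hτpos.and (eventually_ge_atTop 0))).exists_forall_of_atTop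
  have hanti : AntitoneOn x (Set.Ici N) :=
    hx.antitoneOn hp (hN N le_rfl).2.2 fun n hn i => ((hN n hn).2.1 i).le
  have hτN : ∀ᶠ n in atTop, ∀ i, N ≤ τ i n :=
    eventually_all.2 fun i => (hτlim i).eventually_ge_atTop N
  obtain ⟨n, hsum, hτn, hn⟩ := (hfreq.and_eventually (hτN.and (eventually_ge_atTop N))).exists
  obtain ⟨hxn, -, hn0⟩ := hN n hn
  have hdelay : x n ≤ ∑ i, p i n * x (τ i n) :=
    calc x n ≤ (∑ i, p i n) * x n := le_mul_of_one_le_left hxn.le hsum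
      _ = ∑ i, p i n * x n := Finset.sum_mul _ _ _
      _ ≤ ∑ i, p i n * x (τ i n) := Finset.sum_le_sum fun i _ =>
          mul_le_mul_of_nonneg_left (hanti (hτn i) hn (hτ i n hn0)) (hp i n hn0)
  linarith [hx n hn0, (hN (n + 1) (by omega)).1]

end

theorem stmt_0_general {m : ℕ} (p : Fin m → ℤ → ℝ) (τ : Fin m → ℤ → ℤ)
    (hp : ∀ i : Fin m, ∀ n : ℤ, 0 ≤ n → 0 ≤ p i n)
    (hτ : ∀ i : Fin m, ∀ n : ℤ, 0 ≤ n → τ i n ≤ n - 1)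
    (hτlim : ∀ i : Fin m, Filter.Tendsto (τ i) Filter.atTop Filter.atTop)
    (θ : ℕ → ℤ) (hθmono : StrictMono θ)
    (hθsum : ∀ n : ℕ, 1 ≤ ∑ i : Fin m, p i (θ n))
    (x : ℤ → ℝ)
    (hxeq : ∀ n : ℤ, 0 ≤ n → x (n + 1) - x n + ∑ i : Fin m, p i n * x (τ i n) = 0) :
    (¬ ∃ N : ℤ, ∀ n ≥ N, 0 < x n) ∧ (¬ ∃ N : ℤ, ∀ n ≥ N, x n < 0) := by
  have hθlim : Tendsto θ atTop atTop :=
    tendsto_atTop_atTop_of_monotone' hθmono.monotone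
      hθmono.not_bddAbove_range_of_isSuccArchimedean
  have hfreq : ∃ᶠ n in atTop, 1 ≤ ∑ i, p i n := hθlim.frequently (.of_forall hθsum)
  have hτ' : ∀ i n, 0 ≤ n → τ i n ≤ n := fun i n hn => (hτ i n hn).trans (by omega)
  have hx : IsRetardedSolution p τ x := hxeq
  refine ⟨?_, ?_⟩
  · rw [← eventually_atTop]
    exact hx.not_eventually_pos hp hτ' hτlim hfreq
  · rw [← eventually_atTop]
    intro hneg
    exact hx.neg.not_eventually_pos hp hτ' hτlim hfreq (hneg.mono fun n => neg_pos.2)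

/-- Theorem 2.3: if there is a (strictly increasing) subsequence `θ(n)` of positive
integers along which `∑_{i=1}^m p_i(θ(n)) ≥ 1`, and `τ_i(n) → ∞`, then every solution
of the retarded equation `Δx(n) + ∑_i p_i(n) x(τ_i(n)) = 0` oscillates, i.e. it is
neither eventually positive nor eventually negative. -/
theorem stmt_0 {m : ℕ} (hm : 0 < m) (p : Fin m → ℤ → ℝ) (τ : Fin m → ℤ → ℤ)
    (hp : ∀ i : Fin m, ∀ n : ℤ, 0 ≤ n → 0 ≤ p i n)
    (hτ : ∀ i : Fin m, ∀ n : ℤ, 0 ≤ n → τ i n ≤ n - 1)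
    (hτlim : ∀ i : Fin m, Filter.Tendsto (τ i) Filter.atTop Filter.atTop)
    (θ : ℕ → ℤ) (hθmono : StrictMono θ) (hθpos : ∀ n : ℕ, 0 < θ n)
    (hθsum : ∀ n : ℕ, 1 ≤ ∑ i : Fin m, p i (θ n))
    (x : ℤ → ℝ)
    (hxeq : ∀ n : ℤ, 0 ≤ n → x (n + 1) - x n + ∑ i : Fin m, p i n * x (τ i n) = 0) :
    (¬ ∃ N : ℤ, ∀ n ≥ N, 0 < x n) ∧ (¬ ∃ N : ℤ, ∀ n ≥ N, x n < 0) :=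
  stmt_0_general p τ hp hτ hτlim θ hθmono hθsum x hxeq
end

section
/- Assume lim_{n→∞} τ_i(n) = ∞ for each 1 ≤ i ≤ m, Σ_{i=1}^m p_i(n) < 1 for all n ≥ 0, and that for some r ∈ ℕ, limsup_{n→∞} Σ_{j=φ(n)}^{n} Σ_{i=1}^m p_i(j) a_r(φ(n), τ_i(j))^{−1} > 1. Then every solution of (E_R) oscillates. -/
/-!
Let `x` be an eventually positive solution. Induction on `r` gives, for `k ≤ n` large,
`a_r(n,k) > 0` and `x(n) ≤ x(k) a_r(n,k)` (for `r = 0`, with `a_0 = 1`, this says that `x` is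
eventually nonincreasing): inserting the bound `x(τ_ℓ(n)) ≥ x(n) a_r(n, τ_ℓ(n))⁻¹` into the
equation yields `x(n+1) ≤ x(n) (1 - ∑_ℓ p_ℓ(n) a_r(n, τ_ℓ(n))⁻¹)`, which is the factor
defining `a_{r+1}`. Summing the equation over `[φ(n), n]` and using `τ_i(j) ≤ φ(n)` there gives
`x(φ(n)) ∑_j ∑_i p_i(j) a_r(φ(n), τ_i(j))⁻¹ ≤ x(φ(n)) - x(n+1) < x(φ(n))`, so the sums in the
limsup are eventually below `1`. Eventually negative solutions are handled through `-x`.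
-/

/-- `aR p τ r n k` is the quantity `a_{r+1}(n,k)` of the paper. -/
noncomputable def aR {m : ℕ} (p : Fin m → ℤ → ℝ) (τ : Fin m → ℤ → ℤ) : ℕ → ℤ → ℤ → ℝ
  | 0, n, k => ∏ i ∈ Finset.Ico k n, (1 - ∑ l : Fin m, p l i)
  | r + 1, n, k => ∏ i ∈ Finset.Ico k n, (1 - ∑ l : Fin m, p l i * (aR p τ r i (τ l i))⁻¹)

/-- `φ_i(n) = max_{0 ≤ s ≤ n} τ_i(s)` (for `n ≥ 0`). -/
noncomputable def phii {m : ℕ} (τ : Fin m → ℤ → ℤ) (i : Fin m) (n : ℤ) : ℤ :=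
  Finset.fold max (τ i 0) (τ i) (Finset.Icc 0 n)

/-- `φ(n) = max_{1 ≤ i ≤ m} φ_i(n)`. -/
noncomputable def phi {m : ℕ} [NeZero m] (τ : Fin m → ℤ → ℤ) (n : ℤ) : ℤ :=
  Finset.univ.sup' Finset.univ_nonempty (fun i => phii τ i n)

open Filter Finset

/-- The paper's `a_r`, with `a_0 = 1`, so that `aPrev p τ (r + 1) = aR p τ r`. -/
noncomputable def aPrev {m : ℕ} (p : Fin m → ℤ → ℝ) (τ : Fin m → ℤ → ℤ) : ℕ → ℤ → ℤ → ℝ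
  | 0, _, _ => 1
  | r + 1, n, k => aR p τ r n k

lemma mul_sum_le_sum_of_mul_le {ι : Type*} [Fintype ι] {y : ℝ} {q c z : ι → ℝ}
    (hq : ∀ l, 0 ≤ q l) (hc : ∀ l, y * c l ≤ z l) : y * ∑ l, q l * c l ≤ ∑ l, q l * z l := by
  rw [mul_sum]
  refine sum_le_sum fun l _ => ?_
  rw [mul_left_comm]
  exact mul_le_mul_of_nonneg_left (hc l) (hq l)

section

variable {m : ℕ} {p : Fin m → ℤ → ℝ} {τ : Fin m → ℤ → ℤ}

lemma aR_eq_prod_aPrev (r : ℕ) (n k : ℤ) :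
    aR p τ r n k = ∏ i ∈ Ico k n, (1 - ∑ l, p l i * (aPrev p τ r i (τ l i))⁻¹) := by
  cases r <;> simp [aR, aPrev]

lemma le_phi [NeZero m] (i : Fin m) {s n : ℤ} (hs : 0 ≤ s) (hsn : s ≤ n) :
    τ i s ≤ phi τ n :=
  ((le_fold_max _).2 (Or.inr ⟨s, mem_Icc.2 ⟨hs, hsn⟩, le_rfl⟩)).trans
    (le_sup' (fun i => phii τ i n) (mem_univ i))

lemma sum_Icc_sub_telescope {M : Type*} [AddCommGroup M] (x : ℤ → M) {a b : ℤ} (hab : a ≤ b) :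
    ∑ j ∈ Icc a b, (x (j + 1) - x j) = x (b + 1) - x a := by
  induction b, hab using Int.leInduction with
  | base => simp
  | succ b hab ih =>
    rw [← Ico_add_one_right_eq_Icc, ← insert_Ico_right_eq_Ico_add_one (by omega),
      sum_insert right_notMem_Ico, Ico_add_one_right_eq_Icc, ih]
    abel

lemma le_mul_prod_Ico_of_le_mul {x f : ℤ → ℝ} {k : ℤ} (hx : ∀ n ≥ k, 0 < x n)
    (hf : ∀ n ≥ k, x (n + 1) ≤ x n * f n) :
    ∀ n ≥ k, 0 < ∏ i ∈ Ico k n, f i ∧ x n ≤ x k * ∏ i ∈ Ico k n, f i := by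
  intro n hn
  induction n, hn using Int.leInduction with
  | base => simp
  | succ n hkn ih =>
    have hfn : 0 < f n :=
      pos_of_mul_pos_right ((hx _ (by omega)).trans_le (hf n hkn)) (hx n hkn).le
    rw [← insert_Ico_right_eq_Ico_add_one hkn, prod_insert right_notMem_Ico]
    refine ⟨mul_pos hfn ih.1, ?_⟩
    calc x (n + 1) ≤ x n * f n := hf n hkn
      _ ≤ x k * (∏ i ∈ Ico k n, f i) * f n := by gcongr; exact ih.2
      _ = x k * (f n * ∏ i ∈ Ico k n, f i) := by ring

lemma le_mul_one_sub_sum_of_le {x : ℤ → ℝ} {n : ℤ}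
    (hxeq : x (n + 1) - x n + ∑ l, p l n * x (τ l n) = 0) (hp : ∀ l, 0 ≤ p l n)
    {c : Fin m → ℝ} (hc : ∀ l, x n * c l ≤ x (τ l n)) :
    x (n + 1) ≤ x n * (1 - ∑ l, p l n * c l) := by
  have := mul_sum_le_sum_of_mul_le hp hc
  linarith [mul_sub (x n) 1 (∑ l, p l n * c l)]

variable {x : ℤ → ℝ}

lemma eventually_le_mul_prod_of_le (hp : ∀ᶠ n in atTop, ∀ l, 0 ≤ p l n)
    (hxeq : ∀ᶠ n in atTop, x (n + 1) - x n + ∑ l, p l n * x (τ l n) = 0)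
    (hx : ∀ᶠ n in atTop, 0 < x n) {c : ℤ → Fin m → ℝ}
    (hc : ∀ᶠ n in atTop, ∀ l, x n * c n l ≤ x (τ l n)) :
    ∀ᶠ k in atTop, ∀ n ≥ k, 0 < ∏ i ∈ Ico k n, (1 - ∑ l, p l i * c i l) ∧
      x n ≤ x k * ∏ i ∈ Ico k n, (1 - ∑ l, p l i * c i l) := by
  filter_upwards [eventually_forall_ge_atTop.2 (hp.and (hxeq.and (hx.and hc)))] with k hk
  exact le_mul_prod_Ico_of_le_mul (fun n hn => (hk n hn).2.2.1)
    fun n hn => le_mul_one_sub_sum_of_le (hk n hn).2.1 (hk n hn).1 (hk n hn).2.2.2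

lemma eventually_le_mul_aPrev (hp : ∀ᶠ n in atTop, ∀ l, 0 ≤ p l n)
    (hτ : ∀ᶠ n in atTop, ∀ l, τ l n ≤ n) (hτlim : ∀ l, Tendsto (τ l) atTop atTop)
    (hxeq : ∀ᶠ n in atTop, x (n + 1) - x n + ∑ l, p l n * x (τ l n) = 0)
    (hx : ∀ᶠ n in atTop, 0 < x n) (r : ℕ) :
    ∀ᶠ k in atTop, ∀ n ≥ k, 0 < aPrev p τ r n k ∧ x n ≤ x k * aPrev p τ r n k := by
  induction r with
  | zero =>
    have hc : ∀ᶠ n in atTop, ∀ l, x n * 0 ≤ x (τ l n) :=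
      (eventually_all.2 fun l => (hτlim l).eventually hx).mono fun n hn l => by
        simpa using (hn l).le
    refine (eventually_le_mul_prod_of_le hp hxeq hx hc).mono fun k hk n hn => ?_
    simpa only [aPrev, mul_zero, sum_const_zero, sub_zero, prod_const_one] using hk n hn
  | succ r ih =>
    have hc : ∀ᶠ n in atTop, ∀ l, x n * (aPrev p τ r n (τ l n))⁻¹ ≤ x (τ l n) := by
      filter_upwards [hτ, eventually_all.2 fun l => (hτlim l).eventually ih] with n hτn hih l
      obtain ⟨ha, hle⟩ := hih l n (hτn l)
      rwa [mul_inv_le_iff₀ ha]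
    refine (eventually_le_mul_prod_of_le hp hxeq hx hc).mono fun k hk n hn => ?_
    have hkn := hk n hn
    rw [← aR_eq_prod_aPrev] at hkn
    exact hkn

lemma not_eventually_pos [NeZero m] (hp : ∀ᶠ n in atTop, ∀ l, 0 ≤ p l n)
    (hτ : ∀ᶠ n in atTop, ∀ l, τ l n ≤ n) (hτlim : ∀ l, Tendsto (τ l) atTop atTop)
    (hxeq : ∀ᶠ n in atTop, x (n + 1) - x n + ∑ l, p l n * x (τ l n) = 0) (r : ℕ)
    (hcond : ∃ᶠ n in atTop,
      1 < ∑ j ∈ Icc (phi τ n) n, ∑ i, p i j * (aR p τ r (phi τ n) (τ i j))⁻¹) :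
    ¬ ∀ᶠ n in atTop, 0 < x n := by
  intro hx
  have hbound : ∀ᶠ k in atTop, ∀ n ≥ k, 0 < aR p τ r n k ∧ x n ≤ x k * aR p τ r n k :=
    eventually_le_mul_aPrev hp hτ hτlim hxeq hx (r + 1)
  have hgood := (hx.and <| hp.and <| hxeq.and <| eventually_ge_atTop 0).and <|
    eventually_all.2 fun i => (hτlim i).eventually hbound
  obtain ⟨n, hS, hτn, hn⟩ := (hcond.and_eventually <| (eventually_all.2 fun i =>
    (hτlim i).eventually (eventually_forall_ge_atTop.2 hgood)).and (eventually_ge_atTop 0)).exists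
  set g := phi τ n
  -- `n` was chosen so that `hgood` holds from `τ 0 n ≤ φ(n)` on.
  have hgood_of_ge := fun j (hj : g ≤ j) => hτn 0 j ((le_phi 0 hn le_rfl).trans hj)
  have hgn : g ≤ n := by
    by_contra h
    rw [Icc_eq_empty_of_lt (not_le.1 h), sum_empty] at hS
    exact zero_lt_one.not_gt hS
  have hterm : ∀ j ∈ Icc g n,
      x g * ∑ i, p i j * (aR p τ r g (τ i j))⁻¹ ≤ ∑ i, p i j * x (τ i j) := by
    intro j hj
    obtain ⟨⟨-, hpj, -, hj0⟩, hτj⟩ := hgood_of_ge j (mem_Icc.1 hj).1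
    refine mul_sum_le_sum_of_mul_le hpj fun i => ?_
    obtain ⟨ha, hle⟩ := hτj i g (le_phi i hj0 (mem_Icc.1 hj).2)
    rwa [mul_inv_le_iff₀ ha]
  have htel : ∑ j ∈ Icc g n, ∑ i, p i j * x (τ i j) = x g - x (n + 1) := by
    rw [← neg_sub, ← sum_Icc_sub_telescope x hgn, ← sum_neg_distrib]
    refine sum_congr rfl fun j hj => ?_
    obtain ⟨⟨-, -, hj, -⟩, -⟩ := hgood_of_ge j (mem_Icc.1 hj).1
    linarith
  obtain ⟨⟨hxg, -⟩, -⟩ := hgood_of_ge g le_rfl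
  obtain ⟨⟨hxn, -⟩, -⟩ := hgood_of_ge (n + 1) (by omega)
  have hlt : x g * ∑ j ∈ Icc g n, ∑ i, p i j * (aR p τ r g (τ i j))⁻¹ < x g * 1 := by
    rw [mul_sum, mul_one]
    linarith [sum_le_sum hterm]
  exact hS.not_gt (lt_of_mul_lt_mul_left hlt hxg.le)

end

lemma frequently_lt_of_lt_limsup_of_nonneg {α : Type*} {f : Filter α} {u : α → ℝ} {b : ℝ}
    (hb : 0 ≤ b) (h : b < limsup u f) : ∃ᶠ a in f, b < u a := by
  by_cases hu : f.IsCoboundedUnder (· ≤ ·) u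
  · exact frequently_lt_of_lt_limsup hu h
  · rw [Real.limsup_of_not_isCoboundedUnder hu] at h
    exact absurd h hb.not_gt

theorem stmt_2_general {m : ℕ} [NeZero m] (p : Fin m → ℤ → ℝ) (τ : Fin m → ℤ → ℤ)
    (hp : ∀ i : Fin m, ∀ n : ℤ, 0 ≤ n → 0 ≤ p i n)
    (hτ : ∀ i : Fin m, ∀ n : ℤ, 0 ≤ n → τ i n ≤ n - 1)
    (hτlim : ∀ i : Fin m, Filter.Tendsto (τ i) Filter.atTop Filter.atTop)
    (r : ℕ)
    (hcond : 1 < Filter.limsup (fun n : ℤ =>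
        ∑ j ∈ Finset.Icc (phi τ n) n, ∑ i : Fin m, p i j * (aR p τ r (phi τ n) (τ i j))⁻¹)
      Filter.atTop)
    (x : ℤ → ℝ)
    (hxeq : ∀ n : ℤ, 0 ≤ n → x (n + 1) - x n + ∑ i : Fin m, p i n * x (τ i n) = 0) :
    (¬ ∃ N : ℤ, ∀ n ≥ N, 0 < x n) ∧ (¬ ∃ N : ℤ, ∀ n ≥ N, x n < 0) := by
  have hp' : ∀ᶠ n in atTop, ∀ i, 0 ≤ p i n := eventually_atTop.2 ⟨0, fun n hn i => hp i n hn⟩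
  have hτ' : ∀ᶠ n in atTop, ∀ i, τ i n ≤ n :=
    eventually_atTop.2 ⟨0, fun n hn i => by linarith [hτ i n hn]⟩
  have hxeq' := eventually_atTop.2 ⟨0, hxeq⟩
  have hneg : ∀ᶠ n in atTop, -x (n + 1) - -x n + ∑ i, p i n * -x (τ i n) = 0 :=
    hxeq'.mono fun n h => by simp only [mul_neg, sum_neg_distrib]; linarith
  have hcond' := frequently_lt_of_lt_limsup_of_nonneg zero_le_one hcond
  refine ⟨fun ⟨N, hN⟩ => ?_, fun ⟨N, hN⟩ => ?_⟩
  · exact not_eventually_pos hp' hτ' hτlim hxeq' r hcond' (eventually_atTop.2 ⟨N, hN⟩)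
  · exact not_eventually_pos (x := fun n => -x n) hp' hτ' hτlim hneg r hcond'
      (eventually_atTop.2 ⟨N, fun n hn => neg_pos.2 (hN n hn)⟩)

/-- Theorem 2.4: if `τ_i(n) → ∞`, `∑_i p_i(n) < 1` for all `n ≥ 0`, and for some `r ∈ ℕ`
`limsup_{n→∞} ∑_{j=φ(n)}^{n} ∑_{i=1}^m p_i(j) a_r(φ(n), τ_i(j))⁻¹ > 1`,
then every solution of the retarded equation oscillates. -/
theorem stmt_2 {m : ℕ} [NeZero m] (p : Fin m → ℤ → ℝ) (τ : Fin m → ℤ → ℤ)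
    (hp : ∀ i : Fin m, ∀ n : ℤ, 0 ≤ n → 0 ≤ p i n)
    (hτ : ∀ i : Fin m, ∀ n : ℤ, 0 ≤ n → τ i n ≤ n - 1)
    (hτlim : ∀ i : Fin m, Filter.Tendsto (τ i) Filter.atTop Filter.atTop)
    (hsum : ∀ n : ℤ, 0 ≤ n → ∑ i : Fin m, p i n < 1)
    (r : ℕ)
    (hcond : 1 < Filter.limsup (fun n : ℤ =>
        ∑ j ∈ Finset.Icc (phi τ n) n, ∑ i : Fin m, p i j * (aR p τ r (phi τ n) (τ i j))⁻¹)
      Filter.atTop)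
    (x : ℤ → ℝ)
    (hxeq : ∀ n : ℤ, 0 ≤ n → x (n + 1) - x n + ∑ i : Fin m, p i n * x (τ i n) = 0) :
    (¬ ∃ N : ℤ, ∀ n ≥ N, 0 < x n) ∧ (¬ ∃ N : ℤ, ∀ n ≥ N, x n < 0) :=
  stmt_2_general p τ hp hτ hτlim r hcond x hxeq
end

section
/- Assume lim_{n→∞} τ_i(n) = ∞ for each 1 ≤ i ≤ m, and let (x(n)) be an eventually positive solution of (E_R). Set α_i = liminf_{n→∞} Σ_{j=φ_i(n)}^{n−1} p_i(j) and α = min_{1≤i≤m} α_i. If 0 < α ≤ −1 + √2, then liminf_{n→∞} x(n+1)/x(φ(n)) ≥ (1 − α − √(1 − 2α − α²))/2. -/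
open Filter Finset Topology

section IntervalSums

variable {M : Type*} [AddCommMonoid M]

lemma sum_Ico_int_add_one_right (f : ℤ → M) {a b : ℤ} (hab : a ≤ b) :
    ∑ j ∈ Ico a (b + 1), f j = ∑ j ∈ Ico a b, f j + f b := by
  rw [Ico_add_one_right_eq_Icc, ← Ico_insert_right hab, sum_insert right_notMem_Ico, add_comm]

lemma sum_Ico_int_consecutive (f : ℤ → M) {a b c : ℤ} (hab : a ≤ b) (hbc : b ≤ c) :
    ∑ j ∈ Ico a b, f j + ∑ j ∈ Ico b c, f j = ∑ j ∈ Ico a c, f j := by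
  rw [← sum_union (Ico_disjoint_Ico_consecutive a b c), Ico_union_Ico_eq_Ico hab hbc]

lemma add_sum_Ico_le_of_forall_add_le [PartialOrder M] [IsOrderedAddMonoid M] {x g : ℤ → M}
    {a b : ℤ} (hab : a ≤ b) (hstep : ∀ j ∈ Ico a b, x (j + 1) + g j ≤ x j) :
    x b + ∑ j ∈ Ico a b, g j ≤ x a := by
  induction b, hab using Int.leInduction with
  | base => simp
  | succ b hab ih =>
    have hb := hstep b (by simp [hab])
    have ih := ih fun j hj => hstep j (by simp only [mem_Ico] at hj ⊢; omega)
    calc x (b + 1) + ∑ j ∈ Ico a (b + 1), g j = x (b + 1) + g b + ∑ j ∈ Ico a b, g j := by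
          rw [sum_Ico_int_add_one_right g hab, add_comm _ (g b), add_assoc]
      _ ≤ x b + ∑ j ∈ Ico a b, g j := by gcongr
      _ ≤ x a := ih

end IntervalSums

lemma exists_antitoneOn_Ici {β : Type*} [Preorder β] {x : ℤ → β}
    (hx : ∀ᶠ j in atTop, x (j + 1) ≤ x j) : ∃ R, AntitoneOn x (Set.Ici R) := by
  obtain ⟨R, hR⟩ := eventually_atTop.1 hx
  exact ⟨R, antitoneOn_of_add_one_le Set.ordConnected_Ici fun j _ hj _ => hR j hj⟩

lemma exists_least_gt_of_tendsto_atTop {h : ℤ → ℤ} (htop : Tendsto h atTop atTop) (n : ℤ) :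
    ∃ M, n < M ∧ n + 1 ≤ h M ∧ ∀ j, n < j → j < M → h j ≤ n := by
  obtain ⟨M, ⟨hnM, hM⟩, hleast⟩ :=
    Int.exists_least_of_bdd (P := fun z => n < z ∧ n + 1 ≤ h z) ⟨n, fun z hz => hz.1.le⟩
      ((eventually_gt_atTop n).and (htop.eventually_ge_atTop (n + 1))).exists
  refine ⟨M, hnM, hM, fun j hnj hjM => ?_⟩
  by_contra hj
  exact absurd (hleast j ⟨hnj, by omega⟩) (by omega)

lemma sq_max_zero_sub_sq_max_zero_le {p q : ℝ} (hp : 0 ≤ p) :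
    max 0 q ^ 2 - max 0 (q - p) ^ 2 ≤ 2 * (p * max 0 q) := by
  rcases le_total q 0 with hq | hq
  · simp [hq, show q - p ≤ 0 by linarith]
  rcases le_total (q - p) 0 with hqp | hqp
  · rw [max_eq_right hq, max_eq_left hqp]; nlinarith
  · rw [max_eq_right hq, max_eq_right hqp]; nlinarith

/-- A discrete form of `∫₀^A (A - Q) dQ = A ^ 2 / 2`. -/
lemma sq_div_two_le_sum_mul_max {p : ℤ → ℝ} {A : ℝ} {k M : ℤ} (hkM : k ≤ M)
    (hp : ∀ j ∈ Ico k M, 0 ≤ p j) (hA : 0 ≤ A) (hAM : A ≤ ∑ j ∈ Ico k M, p j) :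
    A ^ 2 / 2 ≤ ∑ j ∈ Ico k M, p j * max 0 (A - ∑ s ∈ Ico k j, p s) := by
  suffices ∀ b, k ≤ b → b ≤ M → A ^ 2 - max 0 (A - ∑ s ∈ Ico k b, p s) ^ 2 ≤
      2 * ∑ j ∈ Ico k b, p j * max 0 (A - ∑ s ∈ Ico k j, p s) by
    have := this M hkM le_rfl
    rw [max_eq_left (by linarith)] at this
    linarith
  intro b hkb
  induction b, hkb using Int.leInduction with
  | base => simp [max_eq_right hA]
  | succ b hkb ih =>
    intro hbM
    have hstep := sq_max_zero_sub_sq_max_zero_le (q := A - ∑ s ∈ Ico k b, p s)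
      (hp b (by simp only [mem_Ico]; omega))
    rw [sum_Ico_int_add_one_right _ hkb, sum_Ico_int_add_one_right _ hkb, sub_add_eq_sub_sub]
    linarith [ih (by omega)]

lemma sqrt_bound_of_le_mul_sub {A L : ℝ} (h : A ^ 2 / 2 ≤ L * (1 - A - L)) :
    (1 - A - √(1 - 2 * A - A ^ 2)) / 2 ≤ L := by
  have hroot : |1 - A - 2 * L| ≤ √(1 - 2 * A - A ^ 2) := Real.abs_le_sqrt (by nlinarith)
  linarith [le_abs_self (1 - A - 2 * L)]

lemma le_liminf_mul_sub_liminf {ι : Type*} {l : Filter ι} {r : ι → ℝ} {c B : ℝ}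
    (hc : 0 < c) (hr : ∀ᶠ i in l, 0 ≤ r i) (hcob : IsCoboundedUnder (· ≥ ·) l r)
    (himprove : ∀ D, 0 ≤ D → (∀ᶠ i in l, D ≤ r i) →
      0 < B - D ∧ ∀ᶠ i in l, c / (B - D) ≤ r i) :
    c ≤ liminf r l * (B - liminf r l) := by
  set L := liminf r l
  have hbdd : IsBoundedUnder (· ≥ ·) l r := isBoundedUnder_of_eventually_ge hr
  obtain ⟨hB, h0⟩ := himprove 0 le_rfl hr
  have hL : 0 < L := (div_pos hc (by simpa using hB)).trans_le (le_liminf_of_le hcob h0)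
  have hε : ∀ ε ∈ Set.Ioo 0 L, c ≤ L * (B - L) + L * ε := by
    rintro ε ⟨hε, hεL⟩
    obtain ⟨hpos, hev⟩ := himprove (L - ε) (by linarith)
      ((eventually_lt_of_lt_liminf (by linarith) hbdd).mono fun _ => le_of_lt)
    have := le_liminf_of_le hcob hev
    rw [div_le_iff₀ hpos] at this
    linarith
  have hlim : Tendsto (fun ε => L * (B - L) + L * ε) (𝓝[>] 0) (𝓝 (L * (B - L))) := by
    refine Tendsto.mono_left ?_ nhdsWithin_le_nhds
    exact Continuous.tendsto' (by fun_prop) _ _ (by simp)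
  exact ge_of_tendsto hlim (mem_of_superset (Ioo_mem_nhdsGT hL) hε)

section Ratio

variable {x : ℤ → ℝ} {R : ℤ}

lemma eventually_div_mem_Ioc (hanti : AntitoneOn x (Set.Ici R)) (hx : ∀ j ≥ R, 0 < x j)
    {g : ℤ → ℤ} (hg : Tendsto g atTop atTop) (hgn : ∀ᶠ n in atTop, g n ≤ n) :
    ∀ᶠ n in atTop, x (n + 1) / x (g n) ∈ Set.Ioc 0 1 := by
  filter_upwards [hg.eventually_ge_atTop R, hgn] with n hgR hgn
  have hxg := hx _ hgR
  exact ⟨div_pos (hx _ (by omega)) hxg,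
    div_le_one_of_le₀ (hanti hgR (by simp only [Set.mem_Ici]; omega) (by omega)) hxg.le⟩

lemma liminf_div_le_liminf_div (hanti : AntitoneOn x (Set.Ici R)) (hx : ∀ j ≥ R, 0 < x j)
    {f g : ℤ → ℤ} (hfg : ∀ n, f n ≤ g n) (hf : Tendsto f atTop atTop)
    (hgn : ∀ᶠ n in atTop, g n ≤ n) :
    liminf (fun n => x (n + 1) / x (f n)) atTop ≤
      liminf (fun n => x (n + 1) / x (g n)) atTop := by
  have hg : Tendsto g atTop atTop := tendsto_atTop_mono hfg hf
  have hfn : ∀ᶠ n in atTop, f n ≤ n := hgn.mono fun n hn => (hfg n).trans hn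
  refine liminf_le_liminf ?_ (isBoundedUnder_of_eventually_ge
    ((eventually_div_mem_Ioc hanti hx hf hfn).mono fun _ h => h.1.le))
    (isBoundedUnder_of_eventually_le
      ((eventually_div_mem_Ioc hanti hx hg hgn).mono fun _ h => h.2)).isCoboundedUnder_ge
  filter_upwards [hf.eventually_ge_atTop R, hgn] with n hfR hgn
  have hgR : R ≤ g n := hfR.trans (hfg n)
  exact div_le_div_of_nonneg_left (hx _ (by omega)).le (hx _ hgR) (hanti hfR hgR (hfg n))

end Ratio

section OneDelay

variable {p x : ℤ → ℝ} {h : ℤ → ℤ} {A D : ℝ} {R₀ R n : ℤ}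

lemma add_mul_max_le_of_delay (hanti : AntitoneOn x (Set.Ici R₀)) (hx : ∀ j ≥ R₀, 0 < x j)
    (hmono : Monotone h) (hR₀ : ∀ j ≥ R, R₀ ≤ h j) (hp : ∀ j ≥ R, 0 ≤ p j)
    (hstep : ∀ j ≥ R, x (j + 1) + p j * x (h j) ≤ x j)
    (hwin : ∀ j ≥ R, A < ∑ s ∈ Ico (h j) j, p s) (hn : R ≤ h n) (hnR : R ≤ n)
    {j : ℤ} (hnj : n < j) (hjn : h j ≤ n) :
    x (n + 1) + x (h n) * max 0 (A - ∑ s ∈ Ico (n + 1) j, p s) ≤ x (h j) := by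
  have hhnj : h n ≤ h j := hmono hnj.le
  have hmass : max 0 (A - ∑ s ∈ Ico (n + 1) j, p s) ≤ ∑ s ∈ Ico (h j) (n + 1), p s := by
    refine max_le (sum_nonneg fun s hs => hp s (by simp only [mem_Ico] at hs; omega)) ?_
    have := sum_Ico_int_consecutive p (by omega : h j ≤ n + 1) hnj
    linarith [hwin j (by omega)]
  calc x (n + 1) + x (h n) * max 0 (A - ∑ s ∈ Ico (n + 1) j, p s)
      ≤ x (n + 1) + ∑ s ∈ Ico (h j) (n + 1), p s * x (h n) := by
        rw [← sum_mul, mul_comm]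
        gcongr
        exact (hx _ (hR₀ n hnR)).le
    _ ≤ x (n + 1) + ∑ s ∈ Ico (h j) (n + 1), p s * x (h s) := by
        gcongr with s hs <;> rw [mem_Ico] at hs
        · exact hp s (by omega)
        · exact hanti (hR₀ s (by omega)) (hR₀ n hnR) (hmono (by omega))
    _ ≤ x (h j) := add_sum_Ico_le_of_forall_add_le (by omega) fun s hs => by
        simp only [mem_Ico] at hs
        exact hstep s (by omega)

lemma exists_lt_and_mul_le_of_delay (hanti : AntitoneOn x (Set.Ici R₀))
    (hx : ∀ j ≥ R₀, 0 < x j) (hmono : Monotone h) (htop : Tendsto h atTop atTop)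
    (hlt : ∀ j ≥ R, h j < j) (hR₀ : ∀ j ≥ R, R₀ ≤ h j) (hp : ∀ j ≥ R, 0 ≤ p j)
    (hstep : ∀ j ≥ R, x (j + 1) + p j * x (h j) ≤ x j)
    (hwin : ∀ j ≥ R, A < ∑ s ∈ Ico (h j) j, p s) (hA : 0 ≤ A)
    (hD : ∀ j ≥ R, D * x (h j) ≤ x (j + 1)) (hD0 : 0 ≤ D) (hn : R ≤ h n) :
    ∃ P, A < P ∧ x (h n) * (A ^ 2 / 2) ≤ x (n + 1) * (1 - D - P) := by
  have hnR : R ≤ n := by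
    by_contra! hnR
    linarith [hmono hnR.le, hlt R le_rfl]
  have hR₀n : R₀ ≤ h n := hR₀ n hnR
  have hhn : h n < n := hlt n hnR
  obtain ⟨M, hnM, hMn, hbefore⟩ := exists_least_gt_of_tendsto_atTop htop n
  have hM : n + 1 < M := by
    by_contra! hM
    have := hlt M (by omega)
    omega
  set Q : ℤ → ℝ := fun j => ∑ s ∈ Ico (n + 1) j, p s
  set S := ∑ j ∈ Ico (n + 1) M, p j * max 0 (A - Q j)
  have hforward : x M + ∑ j ∈ Ico (n + 1) M, p j * x (h j) ≤ x (n + 1) :=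
    add_sum_Ico_le_of_forall_add_le hM.le fun j hj => hstep j (by simp only [mem_Ico] at hj; omega)
  have hback : Q M * x (n + 1) + x (h n) * S ≤ ∑ j ∈ Ico (n + 1) M, p j * x (h j) := by
    rw [sum_mul, mul_sum, ← sum_add_distrib]
    refine sum_le_sum fun j hj => ?_
    rw [mem_Ico] at hj
    have := mul_le_mul_of_nonneg_left (add_mul_max_le_of_delay hanti hx hmono hR₀ hp hstep hwin
      hn hnR hj.1 (hbefore j hj.1 hj.2)) (hp j (by omega))
    linarith
  have hQM : A < Q M := (hwin M (by omega)).trans_le <| sum_le_sum_of_subset_of_nonneg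
    (Ico_subset_Ico_left hMn) fun s hs _ => hp s (by simp only [mem_Ico] at hs; omega)
  have hS : A ^ 2 / 2 ≤ S :=
    sq_div_two_le_sum_mul_max hM.le (fun j hj => hp j (by simp only [mem_Ico] at hj; omega)) hA
      hQM.le
  have hxM : D * x (n + 1) ≤ x M := by
    have hM1 := hD (M - 1) (by omega)
    rw [sub_add_cancel] at hM1
    refine le_trans (mul_le_mul_of_nonneg_left ?_ hD0) hM1
    exact hanti (hR₀ (M - 1) (by omega)) (by simp only [Set.mem_Ici]; omega)
      ((hbefore (M - 1) (by omega) (by omega)).trans (by omega))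
  refine ⟨Q M, hQM, ?_⟩
  have := mul_le_mul_of_nonneg_left hS (hx _ hR₀n).le
  linarith

lemma lower_bound_improve_of_delay (hanti : AntitoneOn x (Set.Ici R₀))
    (hx : ∀ j ≥ R₀, 0 < x j) (hmono : Monotone h) (htop : Tendsto h atTop atTop)
    (hlt : ∀ᶠ j in atTop, h j < j) (hp : ∀ᶠ j in atTop, 0 ≤ p j)
    (hstep : ∀ᶠ j in atTop, x (j + 1) + p j * x (h j) ≤ x j)
    (hwin : ∀ᶠ j in atTop, A < ∑ s ∈ Ico (h j) j, p s) (hA : 0 < A)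
    (hD0 : 0 ≤ D) (hD : ∀ᶠ j in atTop, D ≤ x (j + 1) / x (h j)) :
    0 < 1 - A - D ∧ ∀ᶠ n in atTop, A ^ 2 / 2 / (1 - A - D) ≤ x (n + 1) / x (h n) := by
  obtain ⟨R, hR⟩ := eventually_atTop.1 <| hlt.and <| (htop.eventually_ge_atTop R₀).and <|
    hp.and <| hstep.and <| hwin.and hD
  simp only [imp_and, forall_and] at hR
  obtain ⟨hltR, hR₀, hpR, hstepR, hwinR, hDR⟩ := hR
  have hbound : ∀ n, R ≤ n → R ≤ h n →
      0 < 1 - A - D ∧ A ^ 2 / 2 / (1 - A - D) ≤ x (n + 1) / x (h n) := by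
    intro n hnR hn
    obtain ⟨P, hAP, hP⟩ := exists_lt_and_mul_le_of_delay hanti hx hmono htop hltR hR₀ hpR
      hstepR hwinR hA.le (fun j hj => (le_div_iff₀ (hx _ (hR₀ j hj))).1 (hDR j hj)) hD0 hn
    have hxhn : 0 < x (h n) := hx _ (hR₀ n hnR)
    have hxn : 0 < x (n + 1) := hx _ (by linarith [hltR n hnR, hR₀ n hnR])
    have hDP : 0 < 1 - D - P := by
      by_contra! hDP
      nlinarith [mul_pos hxhn (show 0 < A ^ 2 / 2 by positivity)]
    refine ⟨by linarith, ?_⟩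
    rw [div_le_div_iff₀ (by linarith) hxhn]
    nlinarith
  have hlarge := (eventually_ge_atTop R).and (htop.eventually_ge_atTop R)
  obtain ⟨n, hnR, hn⟩ := hlarge.exists
  exact ⟨(hbound n hnR hn).1, hlarge.mono fun n hn => (hbound n hn.1 hn.2).2⟩

lemma sqrt_bound_le_liminf_of_delay (hanti : AntitoneOn x (Set.Ici R₀))
    (hx : ∀ j ≥ R₀, 0 < x j) (hmono : Monotone h) (htop : Tendsto h atTop atTop)
    (hlt : ∀ᶠ j in atTop, h j < j) (hp : ∀ᶠ j in atTop, 0 ≤ p j)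
    (hstep : ∀ᶠ j in atTop, x (j + 1) + p j * x (h j) ≤ x j)
    (hwin : ∀ᶠ j in atTop, A < ∑ s ∈ Ico (h j) j, p s) (hA : 0 < A) :
    (1 - A - √(1 - 2 * A - A ^ 2)) / 2 ≤ liminf (fun n => x (n + 1) / x (h n)) atTop := by
  have hr := eventually_div_mem_Ioc hanti hx htop (hlt.mono fun _ => le_of_lt)
  exact sqrt_bound_of_le_mul_sub <| le_liminf_mul_sub_liminf (by positivity)
    (hr.mono fun _ hn => hn.1.le)
    (isBoundedUnder_of_eventually_le (hr.mono fun _ hn => hn.2)).isCoboundedUnder_ge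
    fun _ hD0 hD => lower_bound_improve_of_delay hanti hx hmono htop hlt hp hstep hwin hA hD0 hD

end OneDelay

section Delays

variable {m : ℕ} (τ : Fin m → ℤ → ℤ) (i : Fin m)

lemma le_phii {n : ℤ} (hn : 0 ≤ n) : τ i n ≤ phii τ i n :=
  (le_fold_max _).2 (Or.inr ⟨n, mem_Icc.2 ⟨hn, le_rfl⟩, le_rfl⟩)

lemma phii_lt {n : ℤ} (hτ : ∀ s, 0 ≤ s → τ i s ≤ s - 1) (hn : 0 ≤ n) :
    phii τ i n < n := by
  refine lt_of_le_of_lt ((fold_max_le _).2 ⟨?_, fun s hs => ?_⟩) (sub_one_lt n)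
  · linarith [hτ 0 le_rfl]
  · rw [mem_Icc] at hs
    linarith [hτ s hs.1]

lemma phii_mono : Monotone (phii τ i) := fun _ _ hab =>
  (fold_max_le _).2 ⟨(le_fold_max _).2 (Or.inl le_rfl), fun s hs =>
    (le_fold_max _).2 (Or.inr ⟨s, Icc_subset_Icc_right hab hs, le_rfl⟩)⟩

lemma tendsto_phii (hτ : Tendsto (τ i) atTop atTop) : Tendsto (phii τ i) atTop atTop :=
  tendsto_atTop_mono' _ ((eventually_ge_atTop 0).mono fun _ => le_phii τ i) hτ

lemma phii_le_phi [NeZero m] (n : ℤ) : phii τ i n ≤ phi τ n :=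
  le_sup' (fun i => phii τ i n) (mem_univ i)

lemma phi_lt [NeZero m] {n : ℤ} (hτ : ∀ i, ∀ s, 0 ≤ s → τ i s ≤ s - 1)
    (hn : 0 ≤ n) : phi τ n < n :=
  (sup'_lt_iff _).2 fun i _ => phii_lt τ i (hτ i) hn

end Delays

section RetardedEquation

variable {m : ℕ} {p : Fin m → ℤ → ℝ} {τ : Fin m → ℤ → ℤ} {x : ℤ → ℝ}

lemma eventually_mul_delay_nonneg (hp : ∀ i, ∀ n, 0 ≤ n → 0 ≤ p i n)
    (hτlim : ∀ i, Tendsto (τ i) atTop atTop) {N : ℤ} (hN : ∀ n ≥ N, 0 < x n) :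
    ∀ᶠ n in atTop, 0 ≤ n ∧ ∀ i, 0 ≤ p i n * x (τ i n) := by
  filter_upwards [eventually_ge_atTop 0,
    eventually_all.2 fun i => (hτlim i).eventually_ge_atTop N] with n hn hτn
  exact ⟨hn, fun i => mul_nonneg (hp i n hn) (hN _ (hτn i)).le⟩

lemma eventually_add_mul_phii_le {R : ℤ} (hanti : AntitoneOn x (Set.Ici R))
    (hp : ∀ i, ∀ n, 0 ≤ n → 0 ≤ p i n) (hτlim : ∀ i, Tendsto (τ i) atTop atTop)
    (hxeq : ∀ n, 0 ≤ n → x (n + 1) - x n + ∑ i, p i n * x (τ i n) = 0)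
    (hterm : ∀ᶠ n in atTop, 0 ≤ n ∧ ∀ i, 0 ≤ p i n * x (τ i n)) (i : Fin m) :
    ∀ᶠ n in atTop, x (n + 1) + p i n * x (phii τ i n) ≤ x n := by
  filter_upwards [hterm, (hτlim i).eventually_ge_atTop R] with n ⟨hn, hterm⟩ hτR
  have hτφ := le_phii τ i hn
  have := mul_le_mul_of_nonneg_left (hanti hτR (hτR.trans hτφ) hτφ) (hp i n hn)
  linarith [hxeq n hn, single_le_sum (fun i _ => hterm i) (mem_univ i)]

lemma eventually_lt_sum_phii {A : ℝ} (hp : ∀ i, ∀ n, 0 ≤ n → 0 ≤ p i n) {i : Fin m}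
    (hτlim : Tendsto (τ i) atTop atTop)
    (hA : A < liminf (fun n => ∑ j ∈ Ico (phii τ i n) n, p i j) atTop) :
    ∀ᶠ n in atTop, A < ∑ j ∈ Ico (phii τ i n) n, p i j :=
  eventually_lt_of_lt_liminf hA <| isBoundedUnder_of_eventually_ge <|
    ((tendsto_phii τ i hτlim).eventually_ge_atTop 0).mono fun _ hn =>
      sum_nonneg fun j hj => hp i j (hn.trans (mem_Ico.1 hj).1)

end RetardedEquation

theorem stmt_3_general {m : ℕ} [NeZero m] (p : Fin m → ℤ → ℝ) (τ : Fin m → ℤ → ℤ)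
    (hp : ∀ i : Fin m, ∀ n : ℤ, 0 ≤ n → 0 ≤ p i n)
    (hτ : ∀ i : Fin m, ∀ n : ℤ, 0 ≤ n → τ i n ≤ n - 1)
    (hτlim : ∀ i : Fin m, Filter.Tendsto (τ i) Filter.atTop Filter.atTop)
    (x : ℤ → ℝ)
    (hxeq : ∀ n : ℤ, 0 ≤ n → x (n + 1) - x n + ∑ i : Fin m, p i n * x (τ i n) = 0)
    (hxpos : ∃ N : ℤ, ∀ n ≥ N, 0 < x n)
    (α : ℝ)
    (hα : α = Finset.univ.inf' Finset.univ_nonempty (fun i : Fin m =>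
        Filter.liminf (fun n : ℤ => ∑ j ∈ Finset.Ico (phii τ i n) n, p i j) Filter.atTop))
    (hα0 : 0 < α) :
    (1 - α - Real.sqrt (1 - 2 * α - α ^ 2)) / 2 ≤
      Filter.liminf (fun n : ℤ => x (n + 1) / x (phi τ n)) Filter.atTop := by
  obtain ⟨N, hN⟩ := hxpos
  let i₀ : Fin m := ⟨0, Nat.pos_of_neZero m⟩
  have hterm := eventually_mul_delay_nonneg hp hτlim hN
  obtain ⟨R, hanti⟩ := exists_antitoneOn_Ici (x := x) <| hterm.mono fun n hn => by
    linarith [hxeq n hn.1, sum_nonneg fun i (_ : i ∈ univ) => hn.2 i]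
  replace hanti := hanti.mono (Set.Ici_subset_Ici.2 (le_max_left R N))
  have hx : ∀ j ≥ max R N, 0 < x j := fun j hj => hN j ((le_max_right R N).trans hj)
  have hbound : ∀ A ∈ Set.Ioo 0 α, (1 - A - √(1 - 2 * A - A ^ 2)) / 2 ≤
      liminf (fun n => x (n + 1) / x (phii τ i₀ n)) atTop := fun A ⟨hA, hAα⟩ =>
    sqrt_bound_le_liminf_of_delay hanti hx (phii_mono τ i₀) (tendsto_phii τ i₀ (hτlim i₀))
      ((eventually_ge_atTop 0).mono fun _ => phii_lt τ i₀ (hτ i₀))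
      ((eventually_ge_atTop 0).mono (hp i₀))
      (eventually_add_mul_phii_le hanti hp hτlim hxeq hterm i₀)
      (eventually_lt_sum_phii hp (hτlim i₀) <| hAα.trans_le <| hα ▸ inf'_le _ (mem_univ i₀)) hA
  have hcompare := liminf_div_le_liminf_div hanti hx (phii_le_phi τ i₀)
    (tendsto_phii τ i₀ (hτlim i₀)) <|
      (eventually_ge_atTop 0).mono fun _ hn => (phi_lt τ hτ hn).le
  have hcont : Tendsto (fun A => (1 - A - √(1 - 2 * A - A ^ 2)) / 2) (𝓝[<] α)
      (𝓝 ((1 - α - √(1 - 2 * α - α ^ 2)) / 2)) :=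
    (Continuous.tendsto (by fun_prop) α).mono_left nhdsWithin_le_nhds
  exact le_of_tendsto hcont <|
    mem_of_superset (Ioo_mem_nhdsLT hα0) fun A hA => (hbound A hA).trans hcompare

/-- Lemma 2.2: if `x` is an eventually positive solution of the retarded equation,
`α_i = liminf_{n→∞} ∑_{j=φ_i(n)}^{n-1} p_i(j)`, `α = min_i α_i` and `0 < α ≤ -1 + √2`,
then `liminf_{n→∞} x(n+1)/x(φ(n)) ≥ (1 - α - √(1 - 2α - α²))/2`. -/
theorem stmt_3 {m : ℕ} [NeZero m] (p : Fin m → ℤ → ℝ) (τ : Fin m → ℤ → ℤ)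
    (hp : ∀ i : Fin m, ∀ n : ℤ, 0 ≤ n → 0 ≤ p i n)
    (hτ : ∀ i : Fin m, ∀ n : ℤ, 0 ≤ n → τ i n ≤ n - 1)
    (hτlim : ∀ i : Fin m, Filter.Tendsto (τ i) Filter.atTop Filter.atTop)
    (x : ℤ → ℝ)
    (hxeq : ∀ n : ℤ, 0 ≤ n → x (n + 1) - x n + ∑ i : Fin m, p i n * x (τ i n) = 0)
    (hxpos : ∃ N : ℤ, ∀ n ≥ N, 0 < x n)
    (α : ℝ)
    (hα : α = Finset.univ.inf' Finset.univ_nonempty (fun i : Fin m =>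
        Filter.liminf (fun n : ℤ => ∑ j ∈ Finset.Ico (phii τ i n) n, p i j) Filter.atTop))
    (hα0 : 0 < α) (hα1 : α ≤ -1 + Real.sqrt 2) :
    (1 - α - Real.sqrt (1 - 2 * α - α ^ 2)) / 2 ≤
      Filter.liminf (fun n : ℤ => x (n + 1) / x (phi τ n)) Filter.atTop :=
  stmt_3_general p τ hp hτ hτlim x hxeq hxpos α hα hα0
end

section
/- Suppose there exists a strictly increasing sequence of positive integers (θ(n))_{n∈ℕ} such that Σ_{i=1}^m p_i(θ(n)) ≥ 1 for all n ∈ ℕ. Then every solution of (E_A) oscillates. -/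
/-!
If `x > 0` from `N` on, the equation makes `∇x ≥ 0` there, so `x` is nondecreasing and, since
`σ_i(n) > n`, `∑ p_i(n) x(σ_i(n)) ≥ (∑ p_i(n)) x(n)`. At an index `n > N` with `∑ p_i(n) ≥ 1`
this gives `x(n - 1) = x(n) - ∑ p_i(n) x(σ_i(n)) ≤ 0`, a contradiction. Eventually negative
solutions are excluded by applying this to `-x`, which solves the same linear equation.
-/

open Filter

def IsAdvancedSolution {m : ℕ} (p : Fin m → ℕ → ℝ) (σ : Fin m → ℕ → ℕ) (x : ℕ → ℝ) : Prop :=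
  ∀ n : ℕ, 1 ≤ n → x n - x (n - 1) - ∑ i : Fin m, p i n * x (σ i n) = 0

namespace IsAdvancedSolution

variable {m : ℕ} {p : Fin m → ℕ → ℝ} {σ : Fin m → ℕ → ℕ} {x : ℕ → ℝ}

theorem neg (hx : IsAdvancedSolution p σ x) : IsAdvancedSolution p σ (-x) := by
  intro n hn
  simp only [Pi.neg_apply, mul_neg, Finset.sum_neg_distrib]
  linarith [hx n hn]

theorem monotoneOn_of_pos (hx : IsAdvancedSolution p σ x) (hp : ∀ i n, 0 ≤ p i n)
    (hσ : ∀ i n, 1 ≤ n → n + 1 ≤ σ i n) {N : ℕ} (hpos : ∀ n ≥ N, 0 < x n) :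
    MonotoneOn x (Set.Ici N) := by
  refine monotoneOn_nat_Ici_of_le_succ fun n hn => ?_
  have hsum : 0 ≤ ∑ i : Fin m, p i (n + 1) * x (σ i (n + 1)) :=
    Finset.sum_nonneg fun i _ =>
      mul_nonneg (hp i _) (hpos _ (by have := hσ i (n + 1) (by omega); omega)).le
  have heq := hx (n + 1) (by omega)
  rw [Nat.add_sub_cancel] at heq
  linarith

theorem not_eventually_pos (hx : IsAdvancedSolution p σ x) (hp : ∀ i n, 0 ≤ p i n)
    (hσ : ∀ i n, 1 ≤ n → n + 1 ≤ σ i n) (hfreq : ∃ᶠ n in atTop, 1 ≤ ∑ i : Fin m, p i n) :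
    ¬ ∃ N : ℕ, ∀ n ≥ N, 0 < x n := by
  rintro ⟨N, hpos⟩
  obtain ⟨n, hNn, hn⟩ := frequently_atTop.mp hfreq (N + 1)
  have hmono := hx.monotoneOn_of_pos hp hσ hpos
  have hxn : 0 < x n := hpos n (by omega)
  have hadv : (∑ i : Fin m, p i n) * x n ≤ ∑ i : Fin m, p i n * x (σ i n) := by
    rw [Finset.sum_mul]
    refine Finset.sum_le_sum fun i _ => mul_le_mul_of_nonneg_left ?_ (hp i n)
    have := hσ i n (by omega)
    exact hmono (Set.mem_Ici.mpr (by omega)) (Set.mem_Ici.mpr (by omega)) (by omega)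
  have hprev : x n ≤ ∑ i : Fin m, p i n * x (σ i n) := by nlinarith
  have heq := hx n (by omega)
  linarith [hpos (n - 1) (by omega)]

end IsAdvancedSolution

theorem stmt_5_general {m : ℕ} (p : Fin m → ℕ → ℝ) (σ : Fin m → ℕ → ℕ)
    (hp : ∀ i : Fin m, ∀ n : ℕ, 0 ≤ p i n)
    (hσ : ∀ i : Fin m, ∀ n : ℕ, 1 ≤ n → n + 1 ≤ σ i n)
    (θ : ℕ → ℕ) (hθmono : StrictMono θ)
    (hθsum : ∀ n : ℕ, 1 ≤ ∑ i : Fin m, p i (θ n))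
    (x : ℕ → ℝ)
    (hxeq : ∀ n : ℕ, 1 ≤ n → x n - x (n - 1) - ∑ i : Fin m, p i n * x (σ i n) = 0) :
    (¬ ∃ N : ℕ, ∀ n ≥ N, 0 < x n) ∧ (¬ ∃ N : ℕ, ∀ n ≥ N, x n < 0) := by
  have hsol : IsAdvancedSolution p σ x := hxeq
  have hfreq : ∃ᶠ n in atTop, 1 ≤ ∑ i : Fin m, p i n :=
    hθmono.tendsto_atTop.frequently (Eventually.of_forall hθsum).frequently
  refine ⟨hsol.not_eventually_pos hp hσ hfreq, fun ⟨N, hneg⟩ => ?_⟩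
  exact hsol.neg.not_eventually_pos hp hσ hfreq ⟨N, fun n hn => neg_pos.mpr (hneg n hn)⟩

/-- Theorem 2.3′: if there is a (strictly increasing) subsequence `θ(n)` of positive
integers with `∑_{i=1}^m p_i(θ(n)) ≥ 1` for all `n`, then every solution of the advanced
equation `∇x(n) - ∑_i p_i(n) x(σ_i(n)) = 0` (for `n ≥ 1`) oscillates. -/
theorem stmt_5 {m : ℕ} (hm : 0 < m) (p : Fin m → ℕ → ℝ) (σ : Fin m → ℕ → ℕ)
    (hp : ∀ i : Fin m, ∀ n : ℕ, 0 ≤ p i n)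
    (hσ : ∀ i : Fin m, ∀ n : ℕ, 1 ≤ n → n + 1 ≤ σ i n)
    (θ : ℕ → ℕ) (hθmono : StrictMono θ) (hθpos : ∀ n : ℕ, 0 < θ n)
    (hθsum : ∀ n : ℕ, 1 ≤ ∑ i : Fin m, p i (θ n))
    (x : ℕ → ℝ)
    (hxeq : ∀ n : ℕ, 1 ≤ n → x n - x (n - 1) - ∑ i : Fin m, p i n * x (σ i n) = 0) :
    (¬ ∃ N : ℕ, ∀ n ≥ N, 0 < x n) ∧ (¬ ∃ N : ℕ, ∀ n ≥ N, x n < 0) :=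
  stmt_5_general p σ hp hσ θ hθmono hθsum x hxeq
end

section
/- Assume lim_{n→∞} τ(n) = ∞ and p(n) < 1 for all n, and let ξ(n) = max_{0≤s≤n} τ(s). If limsup_{n→∞} Σ_{j=ξ(n)}^{n} p(j) Π_{i=τ(j)}^{ξ(n)−1} (1 − p(i))^{−1} > 1, then every solution of the equation Δx(n) + p(n) x(τ(n)) = 0 oscillates. -/
/-! If `x > 0` eventually, then `x` is eventually nonincreasing, so `x(τ i) ≥ x(i)` and hence
`x(i + 1) ≤ (1 - p(i)) x(i)`; iterating, `x(τ j) ≥ x(ξ) ∏_{i=τ(j)}^{ξ-1} (1 - p(i))⁻¹` for `j ≥ ξ`.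
Summing the equation over the window `ξ(n) ≤ j ≤ n`, whose delays all land at or below `ξ(n)`,
gives `x(ξ(n)) ≥ x(ξ(n)) S(n) + x(n + 1)`, so the window sum `S(n)` is eventually at most `1`,
against the `limsup` hypothesis. Eventually negative solutions are handled through `-x`. -/

open Filter Set

/-- `ξ(n) = max_{0 ≤ s ≤ n} τ(s)` (for `n ≥ 0`). -/
noncomputable def xiMax (τ : ℤ → ℤ) (n : ℤ) : ℤ :=
  Finset.fold max (τ 0) τ (Finset.Icc 0 n)

lemma xiMax_le {τ : ℤ → ℤ} {n c : ℤ} (hn : 0 ≤ n) (h : ∀ s, 0 ≤ s → s ≤ n → τ s ≤ c) :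
    xiMax τ n ≤ c := by
  rw [xiMax, Finset.fold_max_le]
  refine ⟨h 0 le_rfl hn, fun s hs => ?_⟩
  rw [Finset.mem_Icc] at hs
  exact h s hs.1 hs.2

lemma le_xiMax {τ : ℤ → ℤ} {n s : ℤ} (hs : 0 ≤ s) (hsn : s ≤ n) : τ s ≤ xiMax τ n := by
  rw [xiMax, Finset.le_fold_max]
  exact Or.inr ⟨s, Finset.mem_Icc.2 ⟨hs, hsn⟩, le_rfl⟩

lemma tendsto_xiMax_atTop {τ : ℤ → ℤ} (hτ : Tendsto τ atTop atTop) :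
    Tendsto (xiMax τ) atTop atTop :=
  tendsto_atTop_mono' _ ((eventually_ge_atTop 0).mono fun _ hn => le_xiMax hn le_rfl) hτ

lemma eventually_forall_Icc_xiMax {τ : ℤ → ℤ} (hτ : Tendsto τ atTop atTop) {P : ℤ → Prop}
    (hP : ∀ᶠ j in atTop, P j) : ∀ᶠ n in atTop, ∀ j ∈ Finset.Icc (xiMax τ n) n, P j := by
  obtain ⟨M, hM⟩ := eventually_atTop.1 hP
  exact ((tendsto_xiMax_atTop hτ).eventually (eventually_ge_atTop M)).mono
    fun n hn j hj => hM j (hn.trans (Finset.mem_Icc.1 hj).1)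

lemma Int.sum_Ico_sub {M : Type*} [AddCommGroup M] (f : ℤ → M) {a b : ℤ} (hab : a ≤ b) :
    ∑ j ∈ Finset.Ico a b, (f (j + 1) - f j) = f b - f a := by
  induction b, hab using Int.leInduction with
  | base => simp
  | succ b hab ih =>
    rw [← Finset.sum_Ico_add_eq_sum_Ico_add_one hab, ih]
    abel

lemma le_mul_prod_Ico_of_le_mul_s13 {R : Type*} [CommSemiring R] [PartialOrder R] [IsOrderedRing R]
    {f g : ℤ → R} {a b : ℤ} (hab : a ≤ b) (hg : ∀ i, a ≤ i → 0 ≤ g i)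
    (hf : ∀ i, a ≤ i → f (i + 1) ≤ g i * f i) : f b ≤ f a * ∏ i ∈ Finset.Ico a b, g i := by
  induction b, hab using Int.leInduction with
  | base => simp
  | succ b hab ih =>
    rw [← Finset.prod_Ico_mul_eq_prod_Ico_add_one hab]
    calc f (b + 1) ≤ g b * f b := hf b hab
      _ ≤ g b * (f a * ∏ i ∈ Finset.Ico a b, g i) := mul_le_mul_of_nonneg_left ih (hg b hab)
      _ = f a * ((∏ i ∈ Finset.Ico a b, g i) * g b) := by ring

lemma sum_mul_le_one_of_mul_le {p x c : ℤ → ℝ} {τ : ℤ → ℤ} {a n : ℤ} (han : a ≤ n)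
    (hxa : 0 < x a) (hxn : 0 ≤ x (n + 1))
    (heq : ∀ j ∈ Finset.Icc a n, x (j + 1) - x j + p j * x (τ j) = 0)
    (hp : ∀ j ∈ Finset.Icc a n, 0 ≤ p j) (hc : ∀ j ∈ Finset.Icc a n, x a * c j ≤ x (τ j)) :
    ∑ j ∈ Finset.Icc a n, p j * c j ≤ 1 := by
  have hsum : ∑ j ∈ Finset.Icc a n, p j * x (τ j) = x a - x (n + 1) := by
    rw [← Finset.Ico_add_one_right_eq_Icc, ← neg_sub, ← Int.sum_Ico_sub x (by omega),
      ← Finset.sum_neg_distrib]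
    refine Finset.sum_congr rfl fun j hj => ?_
    rw [Finset.Ico_add_one_right_eq_Icc] at hj
    linarith [heq j hj]
  have hle : x a * ∑ j ∈ Finset.Icc a n, p j * c j ≤ x a * 1 := by
    rw [Finset.mul_sum, mul_one]
    calc ∑ j ∈ Finset.Icc a n, x a * (p j * c j)
        = ∑ j ∈ Finset.Icc a n, p j * (x a * c j) := by simp only [mul_left_comm]
      _ ≤ ∑ j ∈ Finset.Icc a n, p j * x (τ j) :=
          Finset.sum_le_sum fun j hj => mul_le_mul_of_nonneg_left (hc j hj) (hp j hj)
      _ ≤ x a := by linarith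
  exact le_of_mul_le_mul_left hle hxa

lemma eventually_succ_le_one_sub_mul {p x : ℤ → ℝ} {τ : ℤ → ℤ}
    (hp : ∀ n : ℤ, 0 ≤ n → 0 ≤ p n) (hp1 : ∀ n : ℤ, 0 ≤ n → p n < 1)
    (hτ : ∀ n : ℤ, 0 ≤ n → τ n ≤ n - 1) (hτlim : Tendsto τ atTop atTop)
    (hxeq : ∀ n : ℤ, 0 ≤ n → x (n + 1) - x n + p n * x (τ n) = 0)
    (hpos : ∀ᶠ n in atTop, 0 < x n) :
    ∀ᶠ n in atTop, x (n + 1) ≤ (1 - p n) * x n ∧ 0 < 1 - p n := by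
  have hdecr : ∀ᶠ n in atTop, x (n + 1) ≤ x n :=
    ((hτlim.eventually hpos).and (eventually_ge_atTop 0)).mono fun n ⟨hxτ, hn⟩ => by
      nlinarith [hxeq n hn, hp n hn]
  obtain ⟨M, hM⟩ := eventually_atTop.1 hdecr
  have hanti : AntitoneOn x (Ici M) :=
    antitoneOn_of_add_one_le ordConnected_Ici fun n _ hn _ => hM n hn
  filter_upwards [hτlim.eventually (eventually_ge_atTop M), eventually_ge_atTop 0] with n hτn hn
  have hτn' := hτ n hn
  have hxτ : x n ≤ x (τ n) := hanti hτn (mem_Ici.2 (by omega)) (by omega)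
  exact ⟨by nlinarith [hxeq n hn, hp n hn], sub_pos.2 (hp1 n hn)⟩

noncomputable def windowSum (p : ℤ → ℝ) (τ : ℤ → ℤ) (n : ℤ) : ℝ :=
  ∑ j ∈ Finset.Icc (xiMax τ n) n, p j * ∏ i ∈ Finset.Ico (τ j) (xiMax τ n), (1 - p i)⁻¹

lemma eventually_windowSum_mem_Icc {p x : ℤ → ℝ} {τ : ℤ → ℤ}
    (hp : ∀ n : ℤ, 0 ≤ n → 0 ≤ p n) (hτ : ∀ n : ℤ, 0 ≤ n → τ n ≤ n - 1)
    (hτlim : Tendsto τ atTop atTop)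
    (hxeq : ∀ n : ℤ, 0 ≤ n → x (n + 1) - x n + p n * x (τ n) = 0)
    (htail : ∀ᶠ n in atTop, 0 < x n ∧ x (n + 1) ≤ (1 - p n) * x n ∧ 0 < 1 - p n) :
    ∀ᶠ n in atTop, 0 ≤ windowSum p τ n ∧ windowSum p τ n ≤ 1 := by
  obtain ⟨M, hM⟩ := eventually_atTop.1 htail
  have hprod : ∀ a b, M ≤ a → a ≤ b → x b ≤ x a * ∏ i ∈ Finset.Ico a b, (1 - p i) :=
    fun a b ha hab => le_mul_prod_Ico_of_le_mul_s13 hab (fun i hi => (hM i (ha.trans hi)).2.2.le)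
      fun i hi => (hM i (ha.trans hi)).2.1
  filter_upwards [eventually_forall_Icc_xiMax hτlim
    ((hτlim.eventually (eventually_ge_atTop M)).and (eventually_ge_atTop 0)),
    (tendsto_xiMax_atTop hτlim).eventually (eventually_ge_atTop M), eventually_ge_atTop 0]
    with n hwin hξ hn
  have hξn : xiMax τ n ≤ n - 1 := xiMax_le hn fun s hs _ => by linarith [hτ s hs]
  have hprod_pos : ∀ j ∈ Finset.Icc (xiMax τ n) n,
      0 < ∏ i ∈ Finset.Ico (τ j) (xiMax τ n), (1 - p i) := fun j hj =>
    Finset.prod_pos fun i hi => (hM i ((hwin j hj).1.trans (Finset.mem_Ico.1 hi).1)).2.2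
  simp only [windowSum, Finset.prod_inv_distrib]
  refine ⟨Finset.sum_nonneg fun j hj => mul_nonneg (hp j (hwin j hj).2)
    (inv_nonneg.2 (hprod_pos j hj).le), sum_mul_le_one_of_mul_le (by omega) (hM _ hξ).1
    (hM (n + 1) (by omega)).1.le (fun j hj => hxeq j (hwin j hj).2)
    (fun j hj => hp j (hwin j hj).2) fun j hj => ?_⟩
  rw [← div_eq_mul_inv, div_le_iff₀ (hprod_pos j hj)]
  exact hprod _ _ (hwin j hj).1 (le_xiMax (hwin j hj).2 (Finset.mem_Icc.1 hj).2)

theorem not_eventually_pos_of_one_lt_limsup_windowSum {p x : ℤ → ℝ} {τ : ℤ → ℤ}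
    (hp : ∀ n : ℤ, 0 ≤ n → 0 ≤ p n) (hp1 : ∀ n : ℤ, 0 ≤ n → p n < 1)
    (hτ : ∀ n : ℤ, 0 ≤ n → τ n ≤ n - 1) (hτlim : Tendsto τ atTop atTop)
    (hcond : 1 < limsup (windowSum p τ) atTop)
    (hxeq : ∀ n : ℤ, 0 ≤ n → x (n + 1) - x n + p n * x (τ n) = 0) :
    ¬ ∀ᶠ n in atTop, 0 < x n := fun hpos => by
  have hwin := eventually_windowSum_mem_Icc hp hτ hτlim hxeq
    (hpos.and (eventually_succ_le_one_sub_mul hp hp1 hτ hτlim hxeq hpos))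
  exact hcond.not_ge <| limsup_le_of_le
    (isCoboundedUnder_le_of_eventually_le _ (hwin.mono fun _ h => h.1)) (hwin.mono fun _ h => h.2)

/-- Theorem 2.1: if `τ(n) → ∞`, `p(n) < 1` for all `n ≥ 0`, and
`limsup_{n→∞} ∑_{j=ξ(n)}^{n} p(j) ∏_{i=τ(j)}^{ξ(n)-1} (1 - p(i))⁻¹ > 1`,
then every solution of `Δx(n) + p(n) x(τ(n)) = 0` oscillates. -/
theorem stmt_13 (p : ℤ → ℝ) (τ : ℤ → ℤ)
    (hp : ∀ n : ℤ, 0 ≤ n → 0 ≤ p n)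
    (hp1 : ∀ n : ℤ, 0 ≤ n → p n < 1)
    (hτ : ∀ n : ℤ, 0 ≤ n → τ n ≤ n - 1)
    (hτlim : Filter.Tendsto τ Filter.atTop Filter.atTop)
    (hcond : 1 < Filter.limsup (fun n : ℤ =>
        ∑ j ∈ Finset.Icc (xiMax τ n) n, p j * ∏ i ∈ Finset.Ico (τ j) (xiMax τ n), (1 - p i)⁻¹)
      Filter.atTop)
    (x : ℤ → ℝ)
    (hxeq : ∀ n : ℤ, 0 ≤ n → x (n + 1) - x n + p n * x (τ n) = 0) :
    (¬ ∃ N : ℤ, ∀ n ≥ N, 0 < x n) ∧ (¬ ∃ N : ℤ, ∀ n ≥ N, x n < 0) := by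
  have hneg : ∀ n : ℤ, 0 ≤ n → (-x) (n + 1) - (-x) n + p n * (-x) (τ n) = 0 := fun n hn => by
    simp only [Pi.neg_apply]
    linarith [hxeq n hn]
  refine ⟨fun h => not_eventually_pos_of_one_lt_limsup_windowSum hp hp1 hτ hτlim hcond hxeq
    (eventually_atTop.2 h), fun ⟨N, hN⟩ => not_eventually_pos_of_one_lt_limsup_windowSum hp hp1 hτ
    hτlim hcond hneg (eventually_atTop.2 ⟨N, fun n hn => neg_pos.2 (hN n hn)⟩)⟩
end
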